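/- (Conserved quantity.) Let (η, ω_G) : I → ℝ^m × ℝ^{n_g} be a differentiable solution of the reduced system η' = B_S(η)ᵀ ω_G, M ω_G' = −A ω_G − B_G Γ sin(η) + u on an interval I containing 0, with η(t) ∈ Ω for all t ∈ I. Then the vector B_L Γ sin(η(t)) is constant on I, i.e., B_L Γ sin(η(t)) = B_L Γ sin(η(0)) for all t ∈ I. -/

import Mathlib

/-! Along the flow, `d/dt (B_L Γ sin η) = B_L Γ'(η) η' = B_L Γ'(η) B_S(η)ᵀ ω_G`. This vanishes:
its transpose is `B_S(η) Γ'(η) B_Lᵀ = B_G (1 - B_L⁺(η) B_L) B_L⁺(η) (B_L Γ'(η) B_Lᵀ)`, and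
`1 - B_L⁺(η) B_L` annihilates the range of `B_L⁺(η)`. Invertibility of `B_L Γ'(η) B_Lᵀ` comes
from `B_L` having full row rank and `Γ'(η)` being positive definite on `Ω`. -/

open Matrix

/-- The state-dependent projected incidence matrix `B_S(η)`, built from the
state-dependent weight matrix `Γ'(η) = Γ diag(cos η_k)`. -/
noncomputable def projIncidence {ng nl m : ℕ}
    (BG : Matrix (Fin ng) (Fin m) ℝ) (BL : Matrix (Fin nl) (Fin m) ℝ)
    (γ : Fin m → ℝ) (η : Fin m → ℝ) : Matrix (Fin ng) (Fin m) ℝ :=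
  let Γ' : Matrix (Fin m) (Fin m) ℝ := diagonal fun k => γ k * Real.cos (η k)
  BG * (1 - (Γ' * BLᵀ * (BL * Γ' * BLᵀ)⁻¹) * BL)

theorem Matrix.vecMul_injective_of_rank_eq_card {K m n : Type*} [Field K] [Fintype m]
    [Fintype n] {B : Matrix m n K} (h : B.rank = Fintype.card m) :
    Function.Injective B.vecMul := by
  rw [vecMul_injective_iff, linearIndependent_iff_card_eq_finrank_span, ← h,
    rank_eq_finrank_span_row, Set.finrank]

theorem Matrix.posDef_mul_diagonal_mul_transpose {m n : Type*} [Fintype m] [Fintype n]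
    [DecidableEq n] {B : Matrix m n ℝ} (hB : B.rank = Fintype.card m) {d : n → ℝ}
    (hd : ∀ k, 0 < d k) : (B * diagonal d * Bᵀ).PosDef := by
  simpa only [conjTranspose_eq_transpose_of_trivial] using
    (PosDef.diagonal hd).mul_mul_conjTranspose_same
    (vecMul_injective_of_rank_eq_card hB)

theorem Matrix.one_sub_mul_inv_mul_mul_eq_zero {K m n : Type*} [Field K] [Fintype m]
    [Fintype n] [DecidableEq m] [DecidableEq n] {P : Matrix m n K} {B : Matrix n m K}
    (h : IsUnit (B * P).det) : (1 - P * (B * P)⁻¹ * B) * P = 0 := by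
  rw [Matrix.sub_mul, Matrix.one_mul, Matrix.mul_assoc, Matrix.mul_assoc P,
    Matrix.nonsing_inv_mul _ h, Matrix.mul_one, sub_self]

theorem Convex.is_const_of_hasDerivAt_eq_zero {E : Type*} [NormedAddCommGroup E]
    [NormedSpace ℝ E] {f : ℝ → E} {s : Set ℝ} (hs : Convex ℝ s)
    (hf : ∀ t ∈ s, HasDerivAt f 0 t) {x y : ℝ} (hx : x ∈ s) (hy : y ∈ s) : f x = f y := by
  have h := hs.norm_image_sub_le_of_norm_hasDerivWithin_le (C := 0)
    (fun t ht => (hf t ht).hasDerivWithinAt) (fun _ _ => by simp) hx hy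
  rw [zero_mul, norm_le_zero_iff, sub_eq_zero] at h
  exact h.symm

theorem HasDerivAt.matrix_mulVec {m n : Type*} [Fintype m] [Fintype n]
    {f : ℝ → n → ℝ} {f' : n → ℝ} {t : ℝ} (A : Matrix m n ℝ) (hf : HasDerivAt f f' t) :
    HasDerivAt (fun s => A *ᵥ f s) (A *ᵥ f') t :=
  (LinearMap.toContinuousLinearMap A.mulVecLin).hasFDerivAt.comp_hasDerivAt t hf

theorem HasDerivAt.pi_sin {n : Type*} [Fintype n] [DecidableEq n] {f : ℝ → n → ℝ}
    {f' : n → ℝ} {t : ℝ} (hf : HasDerivAt f f' t) :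
    HasDerivAt (fun s k => Real.sin (f s k)) (diagonal (fun k => Real.cos (f t k)) *ᵥ f') t :=
  hasDerivAt_pi.mpr fun k => by simpa only [mulVec_diagonal] using (hasDerivAt_pi.mp hf k).sin

theorem mul_diagonal_mul_transpose_projIncidence {ng nl m : ℕ}
    (BG : Matrix (Fin ng) (Fin m) ℝ) {BL : Matrix (Fin nl) (Fin m) ℝ} (hBL : BL.rank = nl)
    {γ η : Fin m → ℝ} (hpos : ∀ k, 0 < γ k * Real.cos (η k)) :
    BL * diagonal (fun k => γ k * Real.cos (η k)) * (projIncidence BG BL γ η)ᵀ = 0 := by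
  have hdet : IsUnit (BL * (diagonal (fun k => γ k * Real.cos (η k)) * BLᵀ)).det := by
    rw [← Matrix.mul_assoc, ← isUnit_iff_isUnit_det]
    exact (posDef_mul_diagonal_mul_transpose (by rwa [Fintype.card_fin]) hpos).isUnit
  have hproj :
      projIncidence BG BL γ η * (diagonal (fun k => γ k * Real.cos (η k)) * BLᵀ) = 0 := by
    simp only [projIncidence]
    rw [Matrix.mul_assoc BG, Matrix.mul_assoc BL, one_sub_mul_inv_mul_mul_eq_zero hdet,
      Matrix.mul_zero]
  simpa only [transpose_mul, transpose_transpose, diagonal_transpose, transpose_zero,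
    Matrix.mul_assoc] using congrArg transpose hproj

theorem conserved_quantity_nonlinear_general
    {ng nl m : ℕ}
    (BG : Matrix (Fin ng) (Fin m) ℝ) (BL : Matrix (Fin nl) (Fin m) ℝ)
    (γ : Fin m → ℝ) (hγ : ∀ k, 0 < γ k)
    (hrank : BL.rank = nl)
    (I : Set ℝ) (hI0 : (0 : ℝ) ∈ I) (hIconv : Convex ℝ I)
    (η : ℝ → Fin m → ℝ) (ωG : ℝ → Fin ng → ℝ)
    (hη : ∀ t ∈ I, HasDerivAt η ((projIncidence BG BL γ (η t))ᵀ *ᵥ ωG t) t)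
    (hΩ : ∀ t ∈ I, ∀ k, η t k ∈ Set.Ioo (-(Real.pi / 2)) (Real.pi / 2)) :
    ∀ t ∈ I,
      (BL * diagonal γ) *ᵥ (fun k => Real.sin (η t k)) =
        (BL * diagonal γ) *ᵥ (fun k => Real.sin (η 0 k)) := by
  intro t ht
  refine hIconv.is_const_of_hasDerivAt_eq_zero
    (f := fun s => (BL * diagonal γ) *ᵥ fun k => Real.sin (η s k)) (fun s hs => ?_) ht hI0
  have hpos : ∀ k, 0 < γ k * Real.cos (η s k) :=
    fun k => mul_pos (hγ k) (Real.cos_pos_of_mem_Ioo (hΩ s hs k))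
  have hderiv := ((hη s hs).pi_sin).matrix_mulVec (BL * diagonal γ)
  rwa [mulVec_mulVec, mulVec_mulVec, Matrix.mul_assoc BL, diagonal_mul_diagonal,
    mul_diagonal_mul_transpose_projIncidence BG hrank hpos, zero_mulVec] at hderiv

theorem conserved_quantity_nonlinear
    {ng nl m : ℕ} (hng : 0 < ng) (hnl : 0 < nl) (hm : 0 < m)
    (BG : Matrix (Fin ng) (Fin m) ℝ) (BL : Matrix (Fin nl) (Fin m) ℝ)
    (γ : Fin m → ℝ) (hγ : ∀ k, 0 < γ k)
    (hrank : BL.rank = nl)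
    (Md Ad : Fin ng → ℝ) (hM : ∀ i, 0 < Md i) (hA : ∀ i, 0 < Ad i)
    (u : Fin ng → ℝ)
    (I : Set ℝ) (hI0 : (0 : ℝ) ∈ I) (hIconv : Convex ℝ I)
    (η : ℝ → Fin m → ℝ) (ωG ωG' : ℝ → Fin ng → ℝ)
    (hη : ∀ t ∈ I, HasDerivAt η ((projIncidence BG BL γ (η t))ᵀ *ᵥ ωG t) t)
    (hωG : ∀ t ∈ I, HasDerivAt ωG (ωG' t) t)
    (hswing : ∀ t ∈ I,
      diagonal Md *ᵥ ωG' t =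
        -(diagonal Ad *ᵥ ωG t) - (BG * diagonal γ) *ᵥ (fun k => Real.sin (η t k)) + u)
    (hΩ : ∀ t ∈ I, ∀ k, η t k ∈ Set.Ioo (-(Real.pi / 2)) (Real.pi / 2)) :
    ∀ t ∈ I,
      (BL * diagonal γ) *ᵥ (fun k => Real.sin (η t k)) =
        (BL * diagonal γ) *ᵥ (fun k => Real.sin (η 0 k)) :=
  conserved_quantity_nonlinear_general BG BL γ hγ hrank I hI0 hIconv η ωG hη hΩ
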